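/- arXiv:2108.04734 — 2 statements merged into one kernel-verified Lean document; each statement's English description precedes it below -/
import Mathlib

section
/- Suppose the LP min{cᵀx : Ax = b, x ≥ 0} has inner radius r > 0, outer radius R, ‖c‖₂ ≤ L with L > 0, and A has full row rank. Let 0 < ε ≤ 1/2, R̄ = 5R/ε, and t = 2^16 ε⁻³ n² (R/r)·LR, and consider the modified LP with these parameters. Suppose (x⁺, x⁻, x^θ) ∈ P_{R̄,t} and (s⁺, s⁻, s^θ) ∈ D_{R̄,t} are strictly positive componentwise and every componentwise product x_i⁺ s_i⁺, x_i⁻ s_i⁻, x^θ s^θ lies in [5LR/6, 7LR/6]. Then x⁺ − x⁻ ∈ P and s⁺ − s^θ·1 ∈ D, and moreover x_i⁻ ≤ ε x_i⁺ and s^θ ≤ ε s_i⁺ for all i. -/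
/-!
Fix `v ∈ P` with `v ≥ r`; then `u = (v, 0, b̃ − Σ v)` is feasible for the modified primal, and
pairing the dual slack with `x − u` gives, for
`G := c̃ᵀx⁻ + vᵀs⁺ + s^θ (b̃ − Σ v)`, the identity `G = xᵀs + cᵀv − cᵀx⁺`. Centrality bounds
`xᵀs` by `(2n + 1) · 7LR/6`, and every term of `G` is nonnegative, so `r s_i⁺ ≤ G` and
`c̃_i x_i⁻ ≤ G`. Since `|x∘| ≤ R ≪ R̄`, the modified center satisfies `x_c⁻ ≈ R̄`, hence
`x_i⁻ ≲ G R̄ / t` while `x_i⁺ ≳ LR r / G`; the choice of `t` turns this into `x_i⁻ ≤ δ x_i⁺`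
as soon as `G = O(nLR/ε)`.
A first pass with the crude bound `−cᵀx⁺ ≤ L b̃` gives `δ = 1/2`. Then `x⁺ − x⁻ ∈ P`, so
`−cᵀx⁺ = O(nLR)`, `G = O(nLR)`, and a second pass gives `δ = ε`. Finally `x^θ = b̃ − Σ x⁺` is of
order `n R̄` while `x_i⁺ ≤ 2nR`, so centrality of `x^θ s^θ` and `x_i⁺ s_i⁺` forces `s^θ ≤ ε s_i⁺`.
-/

open Matrix Finset

theorem Matrix.transpose_mulVec_dotProduct {m n R : Type*} [Fintype m] [Fintype n]
    [CommSemiring R] (A : Matrix m n R) (y : m → R) (w : n → R) : Aᵀ *ᵥ y ⬝ᵥ w = y ⬝ᵥ A *ᵥ w := by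
  rw [mulVec_transpose, dotProduct_mulVec]

section MinNormSolution

variable {m n : Type*} [Fintype m] [DecidableEq m] [Fintype n]

theorem Matrix.isUnit_of_rank_eq_card {K : Type*} [Field K] {M : Matrix m m K}
    (h : M.rank = Fintype.card m) : IsUnit M := by
  refine mulVec_surjective_iff_isUnit.mp fun w => ?_
  have htop : LinearMap.range M.mulVecLin = ⊤ :=
    Submodule.eq_top_of_finrank_eq (by rw [← Matrix.rank, h, Module.finrank_fintype_fun_eq_card])
  exact LinearMap.mem_range.mp (htop ▸ Submodule.mem_top)

noncomputable def Matrix.minNormSolution (A : Matrix m n ℝ) (b : m → ℝ) : n → ℝ :=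
  Aᵀ *ᵥ ((A * Aᵀ)⁻¹ *ᵥ b)

theorem Matrix.mulVec_minNormSolution {A : Matrix m n ℝ} (hA : A.rank = Fintype.card m)
    (b : m → ℝ) : A *ᵥ A.minNormSolution b = b := by
  have hdet : IsUnit (A * Aᵀ).det := (isUnit_iff_isUnit_det _).mp
    (isUnit_of_rank_eq_card (by rw [rank_self_mul_transpose, hA]))
  rw [minNormSolution, mulVec_mulVec, mulVec_mulVec, mul_nonsing_inv _ hdet, one_mulVec]

theorem Matrix.sum_sq_minNormSolution_le {A : Matrix m n ℝ} (hA : A.rank = Fintype.card m)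
    {b : m → ℝ} {v : n → ℝ} (hv : A *ᵥ v = b) :
    ∑ i, A.minNormSolution b i ^ 2 ≤ ∑ i, v i ^ 2 := by
  set x := A.minNormSolution b
  have horth : ∑ i, x i * (v i - x i) = 0 := by
    change (Aᵀ *ᵥ _) ⬝ᵥ (v - x) = 0
    rw [transpose_mulVec_dotProduct, mulVec_sub, hv, mulVec_minNormSolution hA, sub_self,
      dotProduct_zero]
  have hpyth : ∑ i, v i ^ 2
      = ∑ i, x i ^ 2 + ∑ i, (v i - x i) ^ 2 + 2 * ∑ i, x i * (v i - x i) := by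
    rw [mul_sum, ← sum_add_distrib, ← sum_add_distrib]
    exact sum_congr rfl fun i _ => by ring
  have := sum_nonneg fun i (_ : i ∈ univ) => sq_nonneg (v i - x i)
  linarith

end MinNormSolution

theorem abs_le_of_sqrt_sum_sq_le {ι : Type*} [Fintype ι] {f : ι → ℝ} {R : ℝ}
    (h : √(∑ j, f j ^ 2) ≤ R) (i : ι) : |f i| ≤ R :=
  (Real.abs_le_sqrt (single_le_sum (fun j _ => sq_nonneg (f j)) (mem_univ i))).trans h

theorem abs_dotProduct_le_mul_sum {ι : Type*} [Fintype ι] {c x : ι → ℝ} {L : ℝ}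
    (hc : ∀ i, |c i| ≤ L) (hx : ∀ i, 0 ≤ x i) : |c ⬝ᵥ x| ≤ L * ∑ i, x i := by
  rw [mul_sum]
  refine (abs_sum_le_sum_abs _ _).trans (sum_le_sum fun i _ => ?_)
  rw [abs_mul, abs_of_nonneg (hx i)]
  exact mul_le_mul_of_nonneg_right (hc i) (hx i)

/-- `(xp, xm, xθ) − (v, 0, bt − ∑ v)` lies in the kernel of the modified constraints, so its
pairing with the dual slack `(sp, sm, sθ)` equals its pairing with the cost `(c, ct, 0)`. -/
theorem modified_gap_identity {m n : Type*} [Fintype m] [Fintype n] {A : Matrix m n ℝ}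
    {b y : m → ℝ} {c ct xp xm v sp sm : n → ℝ} {xθ sθ lam bt : ℝ}
    (hx : A *ᵥ (xp - xm) = b) (hsum : ∑ i, xp i + xθ = bt) (hv : A *ᵥ v = b)
    (hsp : ∀ i, (Aᵀ *ᵥ y) i + lam + sp i = c i) (hsm : ∀ i, -(Aᵀ *ᵥ y) i + sm i = ct i)
    (hlam : lam + sθ = 0) :
    ct ⬝ᵥ xm + v ⬝ᵥ sp + sθ * (bt - ∑ i, v i)
      = xp ⬝ᵥ sp + xm ⬝ᵥ sm + xθ * sθ + c ⬝ᵥ v - c ⬝ᵥ xp := by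
  set a := Aᵀ *ᵥ y
  have horth : ∑ i, a i * (xp i - xm i - v i) = 0 := by
    change a ⬝ᵥ (xp - xm - v) = 0
    rw [transpose_mulVec_dotProduct, mulVec_sub, hx, hv, sub_self, dotProduct_zero]
  have hcoord : ∀ i, ct i * xm i + v i * sp i - xp i * sp i - xm i * sm i - c i * v i + c i * xp i
      = a i * (xp i - xm i - v i) + lam * xp i - lam * v i := fun i => by
    linear_combination (v i - xp i) * hsp i - xm i * hsm i
  have hsums := sum_congr rfl fun i (_ : i ∈ univ) => hcoord i
  simp only [sum_add_distrib, sum_sub_distrib, ← mul_sum, horth] at hsums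
  simp only [dotProduct]
  linear_combination hsums + lam * hsum + (bt - ∑ i, v i - xθ) * hlam

theorem Fin.sum_le_mul_of_le {n : ℕ} {f : Fin n → ℝ} {β : ℝ} (h : ∀ i, f i ≤ β) :
    ∑ i, f i ≤ n * β := by
  simpa using sum_le_card_nsmul univ f β fun i _ => h i

theorem le_mul_of_mul_le_of_le_mul {u w p q p' q' e : ℝ} (hq : 0 < q) (hq' : 0 < q') (he : 0 ≤ e)
    (hu : q * u ≤ p) (hw : p' ≤ q' * w) (h : p * q' ≤ e * p' * q) : u ≤ e * w := by
  refine le_of_mul_le_mul_left ?_ (mul_pos hq hq')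
  nlinarith [mul_le_mul_of_nonneg_right hu hq'.le,
    mul_le_mul_of_nonneg_left hw (mul_nonneg he hq.le)]

theorem center_coord_bounds {c L t Rb : ℝ} (hc : |c| ≤ L) (hL : 0 < L) (hRb : 0 < Rb)
    (ht : 4 * (L * Rb) ≤ t) :
    4 / 5 * Rb ≤ t / (c + t / Rb) ∧ t / (c + t / Rb) ≤ 4 / 3 * Rb := by
  obtain ⟨hc₁, hc₂⟩ := abs_le.mp hc
  have hτ : 4 * L ≤ t / Rb := by rw [le_div_iff₀ hRb]; linarith
  have hden : 0 < c + t / Rb := by linarith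
  have ht' : t = t / Rb * Rb := (div_mul_cancel₀ t hRb.ne').symm
  constructor
  · rw [le_div_iff₀ hden]; nlinarith
  · rw [div_le_iff₀ hden]; nlinarith

theorem le_mul_of_gap_le {xp sp xm r t κ G X e : ℝ} (hr : 0 < r) (ht : 0 < t) (he : 0 ≤ e)
    (hxp : 0 ≤ xp) (hsp : 0 < sp) (hκ : κ ≤ xp * sp) (hspG : r * sp ≤ G) (hxmG : t * xm ≤ G * X)
    (hnum : G * X * G ≤ e * (κ * r) * t) : xm ≤ e * xp := by
  refine le_mul_of_mul_le_of_le_mul ht ((mul_pos hr hsp).trans_le hspG) he hxmG ?_ hnum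
  calc κ * r ≤ xp * sp * r := by gcongr
    _ = xp * (r * sp) := by ring
    _ ≤ G * xp := by rw [mul_comm G]; gcongr

theorem mul_le_gap {ι : Type*} [Fintype ι] {ct xcm xm v sp : ι → ℝ} {r t X θ : ℝ}
    (hct : ∀ i, ct i * xcm i = t) (hxcm : ∀ i, 0 < xcm i ∧ xcm i ≤ X) (ht : 0 < t)
    (hxm : ∀ i, 0 ≤ xm i) (hsp : ∀ i, 0 ≤ sp i) (hr : 0 ≤ r) (hv : ∀ i, r ≤ v i) (hθ : 0 ≤ θ) :
    (∀ i, r * sp i ≤ ct ⬝ᵥ xm + v ⬝ᵥ sp + θ) ∧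
      ∀ i, t * xm i ≤ (ct ⬝ᵥ xm + v ⬝ᵥ sp + θ) * X := by
  have hctxm : ∀ i, 0 ≤ ct i * xm i := fun i =>
    mul_nonneg (nonneg_of_mul_nonneg_left (hct i ▸ ht.le) (hxcm i).1) (hxm i)
  have hvsp : ∀ i, 0 ≤ v i * sp i := fun i => mul_nonneg (hr.trans (hv i)) (hsp i)
  have hS₁ : 0 ≤ ct ⬝ᵥ xm := sum_nonneg fun i _ => hctxm i
  have hS₂ : 0 ≤ v ⬝ᵥ sp := sum_nonneg fun i _ => hvsp i
  refine ⟨fun i => ?_, fun i => ?_⟩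
  · have : v i * sp i ≤ v ⬝ᵥ sp := single_le_sum (fun j _ => hvsp j) (mem_univ i)
    nlinarith [mul_le_mul_of_nonneg_right (hv i) (hsp i)]
  · have : ct i * xm i ≤ ct ⬝ᵥ xm := single_le_sum (fun j _ => hctxm j) (mem_univ i)
    calc t * xm i = ct i * xm i * xcm i := by rw [← hct i]; ring
      _ ≤ (ct ⬝ᵥ xm + v ⬝ᵥ sp + θ) * X :=
        mul_le_mul (by linarith) (hxcm i).2 (hxcm i).1.le (by linarith)

theorem gap_le_sub_dotProduct {n : ℕ} {xp sp xm sm c v : Fin n → ℝ} {xθ sθ G β L R : ℝ}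
    (hgap : G = xp ⬝ᵥ sp + xm ⬝ᵥ sm + xθ * sθ + c ⬝ᵥ v - c ⬝ᵥ xp)
    (hpp : ∀ i, xp i * sp i ≤ β) (hpm : ∀ i, xm i * sm i ≤ β) (hθ : xθ * sθ ≤ β)
    (hc : ∀ i, |c i| ≤ L) (hL : 0 ≤ L) (hv : ∀ i, 0 ≤ v i) (hvR : ∀ i, v i ≤ R) :
    G ≤ 2 * (n * β) + β + L * (n * R) - c ⬝ᵥ xp := by
  have h₁ := Fin.sum_le_mul_of_le hpp
  have h₂ := Fin.sum_le_mul_of_le hpm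
  have h₃ : L * ∑ i, v i ≤ L * (n * R) := by gcongr; exact Fin.sum_le_mul_of_le hvR
  have h₄ := le_of_abs_le (abs_dotProduct_le_mul_sum hc hv)
  simp only [dotProduct] at hgap h₄ ⊢
  linarith

structure ModifiedParams (n : ℕ) (r R L ε Rb t : ℝ) : Prop where
  n_pos : 0 < n
  r_pos : 0 < r
  r_le_R : r ≤ R
  L_pos : 0 < L
  ε_pos : 0 < ε
  ε_le_half : ε ≤ 1 / 2
  Rb_eq : Rb = 5 * R / ε
  t_eq : t = 2 ^ 16 * ε⁻¹ ^ 3 * n ^ 2 * (R / r) * (L * R)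

namespace ModifiedParams

variable {n : ℕ} {r R L ε Rb t : ℝ}

theorem one_le_n (hp : ModifiedParams n r R L ε Rb t) : (1 : ℝ) ≤ n := by
  exact_mod_cast hp.n_pos

theorem R_pos (hp : ModifiedParams n r R L ε Rb t) : 0 < R := hp.r_pos.trans_le hp.r_le_R

theorem ε_mul_Rb (hp : ModifiedParams n r R L ε Rb t) : ε * Rb = 5 * R := by
  rw [hp.Rb_eq]; field_simp [hp.ε_pos.ne']

theorem Rb_pos (hp : ModifiedParams n r R L ε Rb t) : 0 < Rb := by
  rw [hp.Rb_eq]; exact div_pos (by linarith [hp.R_pos]) hp.ε_pos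

theorem ten_mul_R_le (hp : ModifiedParams n r R L ε Rb t) : 10 * R ≤ Rb := by
  nlinarith [hp.ε_mul_Rb, hp.ε_le_half, hp.Rb_pos]

theorem t_mul_eq (hp : ModifiedParams n r R L ε Rb t) :
    t * ε ^ 3 * r = 2 ^ 16 * n ^ 2 * (L * R) * R := by
  rw [hp.t_eq]; field_simp [hp.ε_pos.ne', hp.r_pos.ne']

theorem four_mul_le_t (hp : ModifiedParams n r R L ε Rb t) : 4 * (L * Rb) ≤ t := by
  have hn : (1 : ℝ) ≤ n ^ 2 := one_le_pow₀ hp.one_le_n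
  have hM : 0 ≤ L * R := mul_nonneg hp.L_pos.le hp.R_pos.le
  refine le_of_mul_le_mul_right ?_ (mul_pos (pow_pos hp.ε_pos 3) hp.r_pos)
  calc 4 * (L * Rb) * (ε ^ 3 * r) = 20 * (L * R) * ε ^ 2 * r := by
        linear_combination 4 * L * ε ^ 2 * r * hp.ε_mul_Rb
    _ ≤ 20 * (L * R) * (1 / 2) ^ 2 * R := by
        gcongr
        all_goals linarith [hp.ε_pos, hp.ε_le_half, hp.r_le_R, hp.r_pos]
    _ ≤ 2 ^ 16 * n ^ 2 * (L * R) * R := by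
        nlinarith [mul_nonneg (sub_nonneg.2 hn) (mul_nonneg hM hp.R_pos.le),
          mul_nonneg hM hp.R_pos.le]
    _ = t * (ε ^ 3 * r) := by linear_combination -hp.t_mul_eq

theorem t_pos (hp : ModifiedParams n r R L ε Rb t) : 0 < t :=
  (mul_pos four_pos (mul_pos hp.L_pos hp.Rb_pos)).trans_le hp.four_mul_le_t

theorem center_bounds (hp : ModifiedParams n r R L ε Rb t) {c xo : Fin n → ℝ}
    (hc : ∀ i, |c i| ≤ L) (hxo : ∀ i, |xo i| ≤ R) :
    (∀ i, 0 < t / (c i + t / Rb) - xo i ∧ t / (c i + t / Rb) - xo i ≤ 3 / 2 * Rb) ∧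
      n * (4 / 5 * Rb) + Rb ≤ ∑ i, t / (c i + t / Rb) + Rb ∧
      ∑ i, t / (c i + t / Rb) + Rb ≤ n * (4 / 3 * Rb) + Rb := by
  have hmem := fun i => center_coord_bounds (hc i) hp.L_pos hp.Rb_pos hp.four_mul_le_t
  have h10 := hp.ten_mul_R_le
  refine ⟨fun i => ?_, ?_, ?_⟩
  · have := abs_le.mp (hxo i); have := hmem i
    constructor <;> linarith [hp.Rb_pos]
  · have := card_nsmul_le_sum univ _ _ fun i _ => (hmem i).1
    simp only [card_univ, Fintype.card_fin, nsmul_eq_mul] at this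
    linarith
  · linarith [Fin.sum_le_mul_of_le fun i => (hmem i).2]

theorem mul_gap_le_of_le (hp : ModifiedParams n r R L ε Rb t) {G B : ℝ}
    (hB : B ≤ n * (4 / 3 * Rb) + Rb)
    (hG : G ≤ 2 * (n * (7 * L * R / 6)) + 7 * L * R / 6 + L * (n * R) + L * B) :
    ε * G ≤ 14 * (n * (L * R)) := by
  have hL := hp.L_pos.le
  have hM : 0 ≤ L * R := mul_nonneg hL hp.R_pos.le
  have hnM : L * R ≤ n * (L * R) := le_mul_of_one_le_left hM hp.one_le_n
  have hεB : ε * B ≤ n * (4 / 3 * (5 * R)) + 5 * R := by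
    nlinarith [mul_le_mul_of_nonneg_left hB hp.ε_pos.le, hp.ε_mul_Rb]
  calc ε * G ≤ ε * (10 / 3 * (n * (L * R)) + 7 / 6 * (L * R)) + L * (ε * B) := by
        nlinarith [mul_le_mul_of_nonneg_left hG hp.ε_pos.le]
    _ ≤ 1 / 2 * (10 / 3 * (n * (L * R)) + 7 / 6 * (L * R))
        + L * (n * (4 / 3 * (5 * R)) + 5 * R) := by
        gcongr; exact hp.ε_le_half
    _ ≤ 14 * (n * (L * R)) := by nlinarith

theorem gap_le_of_le (hp : ModifiedParams n r R L ε Rb t) {G : ℝ}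
    (hG : G ≤ 2 * (n * (7 * L * R / 6)) + 7 * L * R / 6 + L * (n * R)
      + (L * (n * R) + L * (r / 100))) :
    G ≤ 6 * (n * (L * R)) := by
  have hM : 0 ≤ L * R := mul_nonneg hp.L_pos.le hp.R_pos.le
  have hnM : L * R ≤ n * (L * R) := le_mul_of_one_le_left hM hp.one_le_n
  have hLr : L * r ≤ L * R := mul_le_mul_of_nonneg_left hp.r_le_R hp.L_pos.le
  linarith

theorem gap_sq_le_of_mul_gap_le (hp : ModifiedParams n r R L ε Rb t) {G : ℝ} (hG : 0 ≤ G)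
    (hεG : ε * G ≤ 14 * (n * (L * R))) :
    G * (3 / 2 * Rb) * G ≤ 1 / 2 * (5 * L * R / 6 * r) * t := by
  refine le_of_mul_le_mul_right ?_ (pow_pos hp.ε_pos 3)
  calc G * (3 / 2 * Rb) * G * ε ^ 3 = (ε * G) ^ 2 * (15 / 2 * R) := by
        linear_combination 3 / 2 * (ε * G) ^ 2 * hp.ε_mul_Rb
    _ ≤ (14 * (n * (L * R))) ^ 2 * (15 / 2 * R) :=
        mul_le_mul_of_nonneg_right (pow_le_pow_left₀ (mul_nonneg hp.ε_pos.le hG) hεG 2)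
          (by linarith [hp.R_pos])
    _ ≤ 5 / 12 * (L * R) * (2 ^ 16 * n ^ 2 * (L * R) * R) := by
        nlinarith [mul_nonneg (mul_nonneg (sq_nonneg (n : ℝ)) (sq_nonneg (L * R))) hp.R_pos.le]
    _ = 1 / 2 * (5 * L * R / 6 * r) * t * ε ^ 3 := by
        linear_combination -5 / 12 * (L * R) * hp.t_mul_eq

theorem card_mul_le_of_mul_gap_le (hp : ModifiedParams n r R L ε Rb t) {G : ℝ}
    (hεG : ε * G ≤ 14 * (n * (L * R))) : n * (G * (3 / 2 * Rb)) ≤ t * (r / 100) := by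
  have hnM : 0 ≤ n * (L * R) := mul_nonneg n.cast_nonneg (mul_nonneg hp.L_pos.le hp.R_pos.le)
  have hnR : 0 ≤ n * R := mul_nonneg n.cast_nonneg hp.R_pos.le
  have hεGε : ε * G * ε ≤ 14 * (n * (L * R)) * (1 / 2) := by
    nlinarith [mul_le_mul_of_nonneg_right hεG hp.ε_pos.le, hp.ε_le_half]
  refine le_of_mul_le_mul_right ?_ (pow_pos hp.ε_pos 3)
  calc n * (G * (3 / 2 * Rb)) * ε ^ 3 = ε * G * ε * (15 / 2 * (n * R)) := by
        linear_combination 3 / 2 * n * G * ε ^ 2 * hp.ε_mul_Rb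
    _ ≤ 14 * (n * (L * R)) * (1 / 2) * (15 / 2 * (n * R)) :=
        mul_le_mul_of_nonneg_right hεGε (by linarith)
    _ ≤ 1 / 100 * (2 ^ 16 * n ^ 2 * (L * R) * R) := by nlinarith [mul_nonneg hnM hnR]
    _ = t * (r / 100) * ε ^ 3 := by linear_combination -1 / 100 * hp.t_mul_eq

theorem gap_sq_le_of_gap_le (hp : ModifiedParams n r R L ε Rb t) {G : ℝ} (hG : 0 ≤ G)
    (hGle : G ≤ 6 * (n * (L * R))) : G * (3 / 2 * Rb) * G ≤ ε * (5 * L * R / 6 * r) * t := by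
  refine le_of_mul_le_mul_right ?_ (pow_pos hp.ε_pos 2)
  calc G * (3 / 2 * Rb) * G * ε ^ 2 = G ^ 2 * ε * (15 / 2 * R) := by
        linear_combination 3 / 2 * G ^ 2 * ε * hp.ε_mul_Rb
    _ ≤ (6 * (n * (L * R))) ^ 2 * (1 / 2) * (15 / 2 * R) :=
        mul_le_mul_of_nonneg_right
          (mul_le_mul (pow_le_pow_left₀ hG hGle 2) hp.ε_le_half hp.ε_pos.le (sq_nonneg _))
          (by linarith [hp.R_pos])
    _ ≤ 5 / 6 * (L * R) * (2 ^ 16 * n ^ 2 * (L * R) * R) := by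
        nlinarith [mul_nonneg (mul_nonneg (sq_nonneg (n : ℝ)) (sq_nonneg (L * R))) hp.R_pos.le]
    _ = ε * (5 * L * R / 6 * r) * t * ε ^ 2 := by
        linear_combination -5 / 6 * (L * R) * hp.t_mul_eq

theorem le_mul_of_products (hp : ModifiedParams n r R L ε Rb t) {xθ sθ xp sp : ℝ}
    (hsθ : 0 ≤ sθ) (hsp : 0 ≤ sp) (hxθ : 3 / 5 * (n * Rb) ≤ xθ) (hxp : xp ≤ 2 * (n * R))
    (hθ : xθ * sθ ≤ 7 * L * R / 6) (hpp : 5 * L * R / 6 ≤ xp * sp) : sθ ≤ ε * sp := by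
  have hn := hp.n_pos
  have := hp.R_pos
  have := hp.Rb_pos
  refine le_mul_of_mul_le_of_le_mul (by positivity) (by positivity) hp.ε_pos.le
    ((mul_le_mul_of_nonneg_right hxθ hsθ).trans hθ)
    (hpp.trans (mul_le_mul_of_nonneg_right hxp hsp)) ?_
  have : ε * (5 * L * R / 6) * (3 / 5 * (n * Rb)) = 5 / 2 * (n * (L * R) * R) := by
    linear_combination L * R * n / 2 * hp.ε_mul_Rb
  rw [this]; nlinarith [mul_nonneg (mul_nonneg (Nat.cast_nonneg n) hp.L_pos.le) hp.R_pos.le]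

theorem xm_le_mul_xp_of_gap_le (hp : ModifiedParams n r R L ε Rb t) {c xp xm sp : Fin n → ℝ}
    {G : ℝ} (hc : ∀ i, |c i| ≤ L) (hxp : ∀ i, 0 < xp i) (hxm : ∀ i, 0 < xm i)
    (hsp : ∀ i, 0 < sp i) (hpp : ∀ i, 5 * L * R / 6 ≤ xp i * sp i)
    (hG_sp : ∀ i, r * sp i ≤ G) (hG_xm : ∀ i, t * xm i ≤ G * (3 / 2 * Rb))
    (hG : G ≤ 2 * (n * (7 * L * R / 6)) + 7 * L * R / 6 + L * (n * R) - c ⬝ᵥ xp)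
    (hxp_sum : ∑ i, xp i ≤ n * (4 / 3 * Rb) + Rb)
    (hfeas : (∀ i, 0 ≤ (xp - xm) i) → ∀ i, (xp - xm) i ≤ R) :
    (∀ i, xm i ≤ ε * xp i) ∧ ∑ i, xp i ≤ 2 * (n * R) := by
  have hG0 : 0 ≤ G := (mul_pos hp.r_pos (hsp ⟨0, hp.n_pos⟩)).le.trans (hG_sp _)
  have hratio : ∀ {e}, 0 ≤ e → G * (3 / 2 * Rb) * G ≤ e * (5 * L * R / 6 * r) * t →
      ∀ i, xm i ≤ e * xp i := fun he hnum i =>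
    le_mul_of_gap_le hp.r_pos hp.t_pos he (hxp i).le (hsp i) (hpp i) (hG_sp i) (hG_xm i) hnum
  have hεG : ε * G ≤ 14 * (n * (L * R)) := by
    refine hp.mul_gap_le_of_le hxp_sum ?_
    have := neg_le_of_abs_le (abs_dotProduct_le_mul_sum hc fun i => (hxp i).le)
    nlinarith [hp.L_pos]
  have hdiff : ∀ i, 0 ≤ (xp - xm) i := fun i => by
    have := hratio (by norm_num) (hp.gap_sq_le_of_mul_gap_le hG0 hεG) i
    simp only [Pi.sub_apply]; linarith [hxp i]
  have hxm_sum : ∑ i, xm i ≤ r / 100 := by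
    have h := Fin.sum_le_mul_of_le hG_xm
    rw [← mul_sum] at h
    exact le_of_mul_le_mul_left (h.trans (hp.card_mul_le_of_mul_gap_le hεG)) hp.t_pos
  have hdiff_sum : ∑ i, (xp - xm) i ≤ n * R := Fin.sum_le_mul_of_le (hfeas hdiff)
  have hsplit : ∑ i, xp i = ∑ i, (xp - xm) i + ∑ i, xm i := by
    simp only [Pi.sub_apply, sum_sub_distrib]; ring
  have hGle : G ≤ 6 * (n * (L * R)) := by
    refine hp.gap_le_of_le (hG.trans ?_)
    have h₁ := neg_le_of_abs_le (abs_dotProduct_le_mul_sum hc hdiff)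
    have h₂ := neg_le_of_abs_le (abs_dotProduct_le_mul_sum hc fun i => (hxm i).le)
    have h₃ : c ⬝ᵥ xp = c ⬝ᵥ (xp - xm) + c ⬝ᵥ xm := by rw [dotProduct_sub]; ring
    have h₄ : L * ∑ i, (xp - xm) i ≤ L * (n * R) := by gcongr; exact hp.L_pos.le
    have h₅ : L * ∑ i, xm i ≤ L * (r / 100) := by gcongr; exact hp.L_pos.le
    linarith
  refine ⟨hratio hp.ε_pos.le (hp.gap_sq_le_of_gap_le hG0 hGle), ?_⟩
  have : r / 100 ≤ n * R := by nlinarith [hp.r_le_R, hp.one_le_n, hp.R_pos]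
  linarith

end ModifiedParams

/-- With `R̄ = 5R/ε` and `t = 2^16 ε⁻³ n² (R/r) LR`, any strictly positive primal-dual
pair of the modified LP whose componentwise products lie in `[5LR/6, 7LR/6]` yields a
feasible pair `(x⁺ − x⁻, s⁺ − s^θ·1) ∈ P × D` of the original LP, with
`x_i⁻ ≤ ε x_i⁺` and `s^θ ≤ ε s_i⁺` for all `i`. -/
theorem modified_LP_recover_feasible {d n : ℕ}
    (A : Matrix (Fin d) (Fin n) ℝ) (b : Fin d → ℝ) (c : Fin n → ℝ)
    (r R L ε Rb t : ℝ)
    (hA : A.rank = d)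
    (hr : 0 < r)
    (hinner : ∃ v : Fin n → ℝ, A.mulVec v = b ∧ ∀ i, r ≤ v i)
    (hR : ∀ x : Fin n → ℝ, A.mulVec x = b → (∀ i, 0 ≤ x i) →
      Real.sqrt (∑ i, (x i) ^ 2) ≤ R)
    (hc : Real.sqrt (∑ i, (c i) ^ 2) ≤ L) (hL : 0 < L)
    (hε0 : 0 < ε) (hε : ε ≤ 1 / 2)
    (hRb : Rb = 5 * R / ε)
    (ht : t = 2 ^ 16 * ε⁻¹ ^ 3 * n ^ 2 * (R / r) * (L * R))
    -- data of the modified LP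
    (xcp : Fin n → ℝ) (hxcp : xcp = fun i => t / (c i + t / Rb))
    (xo : Fin n → ℝ) (hxo : xo = Aᵀ.mulVec ((A * Aᵀ)⁻¹.mulVec b))
    (xcm : Fin n → ℝ) (hxcm : xcm = xcp - xo)
    (ctilde : Fin n → ℝ) (hct : ctilde = fun i => t / xcm i)
    (btilde : ℝ) (hbt : btilde = (∑ i, xcp i) + Rb)
    -- a strictly positive primal point of the modified LP
    (xp xm : Fin n → ℝ) (xθ : ℝ)
    (hxpos : (∀ i, 0 < xp i) ∧ (∀ i, 0 < xm i) ∧ 0 < xθ)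
    (hPmem : A.mulVec (xp - xm) = b ∧ (∑ i, xp i) + xθ = btilde)
    -- a strictly positive dual point of the modified LP
    (sp sm : Fin n → ℝ) (sθ : ℝ)
    (hspos : (∀ i, 0 < sp i) ∧ (∀ i, 0 < sm i) ∧ 0 < sθ)
    (hDmem : ∃ (y : Fin d → ℝ) (lam : ℝ),
      (∀ i, Aᵀ.mulVec y i + lam + sp i = c i) ∧
      (∀ i, -(Aᵀ.mulVec y i) + sm i = ctilde i) ∧
      lam + sθ = 0)
    -- all componentwise primal-dual products lie in [5LR/6, 7LR/6]
    (hprod : (∀ i, 5 * L * R / 6 ≤ xp i * sp i ∧ xp i * sp i ≤ 7 * L * R / 6) ∧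
             (∀ i, 5 * L * R / 6 ≤ xm i * sm i ∧ xm i * sm i ≤ 7 * L * R / 6) ∧
             (5 * L * R / 6 ≤ xθ * sθ ∧ xθ * sθ ≤ 7 * L * R / 6)) :
    -- x⁺ − x⁻ ∈ P
    (A.mulVec (xp - xm) = b ∧ ∀ i, 0 ≤ xp i - xm i) ∧
    -- s⁺ − s^θ·1 ∈ D
    ((∃ y : Fin d → ℝ, ∀ i, Aᵀ.mulVec y i + (sp i - sθ) = c i) ∧
      (∀ i, 0 ≤ sp i - sθ)) ∧
    (∀ i, xm i ≤ ε * xp i) ∧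
    (∀ i, sθ ≤ ε * sp i) := by
  obtain ⟨hxp, hxm, hxθ⟩ := hxpos
  obtain ⟨hsp, -, hsθ⟩ := hspos
  obtain ⟨hAx, hsum⟩ := hPmem
  obtain ⟨y, lam, hyp, hym, hlam⟩ := hDmem
  obtain ⟨hpp, hpm, hpθ⟩ := hprod
  obtain ⟨v, hAv, hvr⟩ := hinner
  have hdual : ∀ i, (Aᵀ *ᵥ y) i + (sp i - sθ) = c i := fun i => by linarith [hyp i]
  rcases Nat.eq_zero_or_pos n with rfl | hn
  · exact ⟨⟨hAx, finZeroElim⟩, ⟨⟨y, hdual⟩, finZeroElim⟩, finZeroElim, finZeroElim⟩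
  have hPle : ∀ x, A *ᵥ x = b → (∀ i, 0 ≤ x i) → ∀ i, x i ≤ R := fun x hx hx0 i =>
    le_of_abs_le (abs_le_of_sqrt_sum_sq_le (hR x hx hx0) i)
  have hv0 : ∀ i, 0 ≤ v i := fun i => hr.le.trans (hvr i)
  have hp : ModifiedParams n r R L ε Rb t :=
    ⟨hn, hr, (hvr ⟨0, hn⟩).trans (hPle v hAv hv0 _), hL, hε0, hε, hRb, ht⟩
  have hcL := abs_le_of_sqrt_sum_sq_le hc
  have hxoR : ∀ i, |xo i| ≤ R := hxo ▸ abs_le_of_sqrt_sum_sq_le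
    ((Real.sqrt_le_sqrt (sum_sq_minNormSolution_le (by simpa using hA) hAv)).trans (hR v hAv hv0))
  obtain ⟨hxcm_mem, hbt_ge, hbt_le⟩ : (∀ i, 0 < xcm i ∧ xcm i ≤ 3 / 2 * Rb) ∧
      n * (4 / 5 * Rb) + Rb ≤ btilde ∧ btilde ≤ n * (4 / 3 * Rb) + Rb := by
    subst hxcm hxcp hbt; exact hp.center_bounds hcL hxoR
  have hv_bt : ∑ i, v i ≤ btilde := by
    nlinarith [Fin.sum_le_mul_of_le (hPle v hAv hv0), hp.ten_mul_R_le, hp.Rb_pos, hp.one_le_n]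
  obtain ⟨hG_sp, hG_xm⟩ := mul_le_gap (ct := ctilde)
    (fun i => by rw [hct]; exact div_mul_cancel₀ t (hxcm_mem i).1.ne') hxcm_mem hp.t_pos
    (fun i => (hxm i).le) (fun i => (hsp i).le) hr.le hvr (mul_nonneg hsθ.le (sub_nonneg.2 hv_bt))
  have hG := gap_le_sub_dotProduct (modified_gap_identity hAx hsum hAv hyp hym hlam)
    (fun i => (hpp i).2) (fun i => (hpm i).2) hpθ.2 hcL hL.le hv0 (hPle v hAv hv0)
  obtain ⟨hxm_eps, hxp_sum⟩ := hp.xm_le_mul_xp_of_gap_le hcL hxp hxm hsp (fun i => (hpp i).1)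
    hG_sp hG_xm hG (by linarith) (hPle _ hAx)
  have hxθ_ge : 3 / 5 * (n * Rb) ≤ xθ := by nlinarith [hp.ten_mul_R_le, hp.one_le_n]
  have hsθ_eps : ∀ i, sθ ≤ ε * sp i := fun i =>
    hp.le_mul_of_products hsθ.le (hsp i).le hxθ_ge
      ((single_le_sum (fun j _ => (hxp j).le) (mem_univ i)).trans hxp_sum) hpθ.2 (hpp i).1
  refine ⟨⟨hAx, fun i => ?_⟩, ⟨⟨y, hdual⟩, fun i => ?_⟩, hxm_eps, hsθ_eps⟩
  · nlinarith [hxm_eps i, hxp i, hε]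
  · nlinarith [hsθ_eps i, hsp i, hε]
end

section
/- Suppose P is nonempty and ‖x‖₂ ≤ R for all x ∈ P. Suppose x* ∈ P is the unique minimizer of cᵀx over P, and there are constants L > 0 and η > 0 such that every extreme point (vertex) x of P with x ≠ x* satisfies cᵀx ≥ cᵀx* + ηLR. Then for any 0 ≤ δ ≤ η and any x ∈ P with cᵀx ≤ cᵀx* + δLR, one has ‖x − x*‖₂ ≤ 2δR/η. -/
/-!
On the compact convex set `P`, the function `y ↦ ηL‖y - x*‖ - 2cᵀ(y - x*)` is convex and
continuous, so by Krein–Milman it is bounded above by its values at the extreme points. It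
vanishes at `x*`, and at any other vertex `z` we have `‖z - x*‖ ≤ 2R` and `cᵀ(z - x*) ≥ ηLR`,
so it is nonpositive everywhere on `P`. At `x` this reads `ηL‖x - x*‖ ≤ 2cᵀ(x - x*) ≤ 2δLR`.
-/

open Matrix

theorem ConvexOn.le_of_forall_extremePoints_le {E : Type*} [AddCommGroup E] [Module ℝ E]
    [TopologicalSpace E] [T2Space E] [IsTopologicalAddGroup E] [ContinuousSMul ℝ E]
    [LocallyConvexSpace ℝ E] {S : Set E} {f : E → ℝ} {r : ℝ} (hS : IsCompact S)
    (hf : ConvexOn ℝ S f) (hfc : ContinuousOn f S) (h : ∀ z ∈ S.extremePoints ℝ, f z ≤ r)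
    {y : E} (hy : y ∈ S) : f y ≤ r := by
  have hclosed : IsClosed {y ∈ S | f y ≤ r} :=
    hfc.preimage_isClosed_of_isClosed hS.isClosed isClosed_Iic
  have hext : S.extremePoints ℝ ⊆ {y ∈ S | f y ≤ r} :=
    fun z hz ↦ ⟨extremePoints_subset hz, h z hz⟩
  rw [← closure_convexHull_extremePoints hS hf.1] at hy
  exact (closure_minimal (convexHull_min hext (hf.convex_le r)) hclosed hy).2

theorem mul_norm_sub_le_of_extremePoints_gap {E : Type*} [NormedAddCommGroup E]
    [NormedSpace ℝ E] {S : Set E} (hS : IsCompact S) (hSc : Convex ℝ S) (ℓ : E →L[ℝ] ℝ)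
    {x₀ : E} (hx₀ : x₀ ∈ S) {R κ : ℝ} (hκ : 0 ≤ κ) (hR : ∀ y ∈ S, ‖y‖ ≤ R)
    (hgap : ∀ z ∈ S.extremePoints ℝ, z ≠ x₀ → ℓ x₀ + κ * R ≤ ℓ z) {y : E} (hy : y ∈ S) :
    κ * ‖y - x₀‖ ≤ 2 * (ℓ y - ℓ x₀) := by
  have hnorm : ConvexOn ℝ S (fun y ↦ ‖y - x₀‖) :=
    ((convexOn_norm convex_univ).comp_affineMap
      (AffineMap.id ℝ E - AffineMap.const ℝ E x₀)).subset (Set.subset_univ _) hSc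
  suffices κ * ‖y - x₀‖ - 2 * ℓ y ≤ -(2 * ℓ x₀) by linarith
  refine ConvexOn.le_of_forall_extremePoints_le (f := fun y ↦ κ * ‖y - x₀‖ - 2 * ℓ y) hS
    ((hnorm.smul hκ).sub ((ℓ.toLinearMap.concaveOn hSc).smul zero_le_two))
    (by fun_prop) (fun z hz ↦ ?_) hy
  obtain rfl | hne := eq_or_ne z x₀
  · simp
  have hdist : ‖z - x₀‖ ≤ 2 * R := by
    linarith [norm_sub_le z x₀, hR z (extremePoints_subset hz), hR x₀ hx₀]
  nlinarith [hgap z hz hne]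

section StandardForm

variable {m ι : Type*} [Fintype ι] (A : Matrix m ι ℝ) (b : m → ℝ)

theorem isClosed_setOf_mulVec_eq_and_nonneg :
    IsClosed {x : ι → ℝ | A *ᵥ x = b ∧ ∀ i, 0 ≤ x i} := by
  simp only [Set.ofPred_and, Set.ofPred_forall]
  exact (isClosed_eq (by fun_prop) continuous_const).inter
    (isClosed_iInter fun i ↦ isClosed_le continuous_const (continuous_apply i))

theorem convex_setOf_mulVec_eq_and_nonneg :
    Convex ℝ {x : ι → ℝ | A *ᵥ x = b ∧ ∀ i, 0 ≤ x i} := by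
  simp only [Set.ofPred_and, Set.ofPred_forall]
  exact ((convex_singleton b).linear_preimage A.mulVecLin).inter
    (convex_iInter fun i ↦ convex_halfSpace_ge (LinearMap.proj i).isLinear 0)

end StandardForm

theorem EuclideanSpace.norm_toLp_eq_sqrt {ι : Type*} [Fintype ι] (y : ι → ℝ) :
    ‖WithLp.toLp 2 y‖ = √(∑ i, y i ^ 2) := by
  rw [← EuclideanSpace.real_norm_sq_eq, Real.sqrt_sq (norm_nonneg _)]

theorem WithLp.extremePoints_preimage_ofLp {ι : Type*} (P : Set (ι → ℝ)) :
    (WithLp.ofLp (p := 2) ⁻¹' P).extremePoints ℝ = WithLp.ofLp ⁻¹' P.extremePoints ℝ := by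
  have h := image_extremePoints (WithLp.linearEquiv 2 ℝ (ι → ℝ)).symm P
  rw [LinearEquiv.image_symm_eq_preimage, LinearEquiv.image_symm_eq_preimage] at h
  exact h.symm

theorem near_optimal_near_vertex_general {d n : ℕ}
    (A : Matrix (Fin d) (Fin n) ℝ) (b : Fin d → ℝ) (c : Fin n → ℝ)
    (R L η : ℝ) (hL : 0 < L) (hη : 0 < η)
    (hR : ∀ x : Fin n → ℝ, A.mulVec x = b → (∀ i, 0 ≤ x i) →
      Real.sqrt (∑ i, (x i) ^ 2) ≤ R)
    (xstar : Fin n → ℝ)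
    (hxstar : A.mulVec xstar = b ∧ ∀ i, 0 ≤ xstar i)
    (hvert : ∀ x ∈ Set.extremePoints ℝ
        {x : Fin n → ℝ | A.mulVec x = b ∧ ∀ i, 0 ≤ x i},
      x ≠ xstar → c ⬝ᵥ xstar + η * L * R ≤ c ⬝ᵥ x)
    (δ : ℝ)
    (x : Fin n → ℝ) (hx : A.mulVec x = b ∧ ∀ i, 0 ≤ x i)
    (hval : c ⬝ᵥ x ≤ c ⬝ᵥ xstar + δ * L * R) :
    Real.sqrt (∑ i, (x i - xstar i) ^ 2) ≤ 2 * δ * R / η := by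
  set P := {x : Fin n → ℝ | A.mulVec x = b ∧ ∀ i, 0 ≤ x i}
  set S : Set (EuclideanSpace ℝ (Fin n)) := WithLp.ofLp ⁻¹' P
  have hSc : Convex ℝ S := (convex_setOf_mulVec_eq_and_nonneg A b).linear_preimage
    (WithLp.linearEquiv 2 ℝ (Fin n → ℝ)).toLinearMap
  have hRS : ∀ y ∈ S, ‖y‖ ≤ R := fun y hy ↦ by
    simpa [← EuclideanSpace.norm_toLp_eq_sqrt] using hR _ hy.1 hy.2
  have hS : IsCompact S := Metric.isCompact_of_isClosed_isBounded
    ((isClosed_setOf_mulVec_eq_and_nonneg A b).preimage (PiLp.continuous_ofLp 2 _))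
    ((Metric.isBounded_closedBall (x := 0) (r := R)).subset fun y hy ↦ by simpa using hRS y hy)
  have hgap : ∀ z ∈ S.extremePoints ℝ, z ≠ WithLp.toLp 2 xstar →
      innerSL ℝ (WithLp.toLp 2 c) (WithLp.toLp 2 xstar) + η * L * R
        ≤ innerSL ℝ (WithLp.toLp 2 c) z := by
    intro z hz hne
    rw [WithLp.extremePoints_preimage_ofLp] at hz
    have := hvert z.ofLp hz fun h ↦ hne (by rw [← h, WithLp.toLp_ofLp])
    simpa [EuclideanSpace.inner_eq_star_dotProduct, dotProduct_comm] using this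
  have key := mul_norm_sub_le_of_extremePoints_gap hS hSc (innerSL ℝ (WithLp.toLp 2 c))
    (x₀ := WithLp.toLp 2 xstar) hxstar (mul_nonneg hη.le hL.le) hRS hgap (y := WithLp.toLp 2 x) hx
  simp only [innerSL_apply_apply, EuclideanSpace.inner_toLp_toLp, star_trivial, ← WithLp.toLp_sub,
    EuclideanSpace.norm_toLp_eq_sqrt, Pi.sub_apply, dotProduct_comm x c,
    dotProduct_comm xstar c] at key
  rw [le_div_iff₀ hη]
  refine le_of_mul_le_mul_left ?_ hL
  calc L * (√(∑ i, (x i - xstar i) ^ 2) * η) = η * L * √(∑ i, (x i - xstar i) ^ 2) := by ring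
    _ ≤ 2 * (c ⬝ᵥ x - c ⬝ᵥ xstar) := key
    _ ≤ L * (2 * δ * R) := by linarith

/-- If `x*` is the unique minimizer of `cᵀx` over the polyhedron
`P = {x : Ax = b, x ≥ 0}`, `‖x‖₂ ≤ R` on `P`, and every other vertex (extreme point)
of `P` has cost at least `cᵀx* + ηLR`, then any `x ∈ P` with
`cᵀx ≤ cᵀx* + δLR` (for `0 ≤ δ ≤ η`) satisfies `‖x − x*‖₂ ≤ 2δR/η`. -/
theorem near_optimal_near_vertex {d n : ℕ}
    (A : Matrix (Fin d) (Fin n) ℝ) (b : Fin d → ℝ) (c : Fin n → ℝ)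
    (R L η : ℝ) (hL : 0 < L) (hη : 0 < η)
    (hP : {x : Fin n → ℝ | A.mulVec x = b ∧ ∀ i, 0 ≤ x i}.Nonempty)
    (hR : ∀ x : Fin n → ℝ, A.mulVec x = b → (∀ i, 0 ≤ x i) →
      Real.sqrt (∑ i, (x i) ^ 2) ≤ R)
    (xstar : Fin n → ℝ)
    (hxstar : A.mulVec xstar = b ∧ ∀ i, 0 ≤ xstar i)
    (hmin : ∀ x : Fin n → ℝ, A.mulVec x = b → (∀ i, 0 ≤ x i) → x ≠ xstar →
      c ⬝ᵥ xstar < c ⬝ᵥ x)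
    (hvert : ∀ x ∈ Set.extremePoints ℝ
        {x : Fin n → ℝ | A.mulVec x = b ∧ ∀ i, 0 ≤ x i},
      x ≠ xstar → c ⬝ᵥ xstar + η * L * R ≤ c ⬝ᵥ x)
    (δ : ℝ) (hδ0 : 0 ≤ δ) (hδη : δ ≤ η)
    (x : Fin n → ℝ) (hx : A.mulVec x = b ∧ ∀ i, 0 ≤ x i)
    (hval : c ⬝ᵥ x ≤ c ⬝ᵥ xstar + δ * L * R) :
    Real.sqrt (∑ i, (x i - xstar i) ^ 2) ≤ 2 * δ * R / η :=
  near_optimal_near_vertex_general A b c R L η hL hη hR xstar hxstar hvert δ x hx hval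
end
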